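/- arXiv:2108.08843 — 9 statements merged into one kernel-verified Lean document; each statement's English description precedes it below -/
import Mathlib

section
/- If a market outcome (X, τ) with zero-sum transfers is stable (individually rational and has no blocking pairs), then X is a maximum weight matching, i.e., X maximizes the sum over all agents a of u_a(μ_X(a)) over all matchings on the agents. -/
open Finset

/-- A two-sided market: agents `A` partitioned into customers `M` and providers `W`. -/
structure TwoSidedMarket (A : Type*) [Fintype A] [DecidableEq A] where
  M : Finset A
  W : Finset A
  disj : Disjoint M W
  cover : M ∪ W = Finset.univ

variable {A : Type*} [Fintype A] [DecidableEq A]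

/-- `μ` is (the partner map of) a matching on the subset `S` of agents:
it is an involution, agents outside `S` are unmatched, and matched pairs cross sides. -/
def IsMatchingOn (Mkt : TwoSidedMarket A) (S : Finset A) (μ : A → A) : Prop :=
  (∀ a, μ (μ a) = a) ∧ (∀ a, μ a ≠ a → a ∈ S) ∧
  (∀ a, μ a ≠ a → (a ∈ Mkt.M ∧ μ a ∈ Mkt.W) ∨ (a ∈ Mkt.W ∧ μ a ∈ Mkt.M))

/-- Transfers `τ` are zero-sum for the matching `μ`. -/
def ZeroSum (μ : A → A) (τ : A → ℝ) : Prop :=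
  (∀ a, μ a ≠ a → τ a + τ (μ a) = 0) ∧ (∀ a, μ a = a → τ a = 0)

/-- Stability of the market outcome `(μ, τ)` with respect to utilities `u`:
individual rationality and no blocking pairs. -/
def Stable (Mkt : TwoSidedMarket A) (u : A → A → ℝ) (μ : A → A) (τ : A → ℝ) : Prop :=
  (∀ a, 0 ≤ u a (μ a) + τ a) ∧
  (∀ m ∈ Mkt.M, ∀ w ∈ Mkt.W,
    u m w + u w m ≤ (u m (μ m) + τ m) + (u w (μ w) + τ w))

/-- Maximum total utility of a matching on the subset `S`. -/
noncomputable def maxWeight (Mkt : TwoSidedMarket A) (u : A → A → ℝ) (S : Finset A) : ℝ :=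
  sSup {x | ∃ μ, IsMatchingOn Mkt S μ ∧ x = ∑ a ∈ S, u a (μ a)}

/-- Subset Instability of the market outcome `(μ, τ)` with respect to utilities `u`. -/
noncomputable def instability (Mkt : TwoSidedMarket A) (u : A → A → ℝ)
    (μ : A → A) (τ : A → ℝ) : ℝ :=
  sSup {x | ∃ S : Finset A, x = maxWeight Mkt u S - ∑ a ∈ S, (u a (μ a) + τ a)}

/-!
Write `p a = u a (μ a) + τ a` for the payoff of agent `a` in the outcome. For any matching `μ'`,
stability gives `u a (μ' a) + u (μ' a) a ≤ p a + p (μ' a)` for every agent `a`: by individual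
rationality if `a` is unmatched in `μ'` (using `u a a = 0`), by the absence of blocking pairs
otherwise. Summing over all agents, each side is counted twice since `μ'` is an involution, and the
transfers sum to zero, so the weight of `μ'` is at most `∑ a, p a`, the weight of `μ`.
-/

lemma Function.Involutive.sum_le_sum_of_add_le {ι : Type*} [Fintype ι] {ν : ι → ι}
    (hν : Function.Involutive ν) {f g : ι → ℝ} (hfg : ∀ i, f i + f (ν i) ≤ g i + g (ν i)) :
    ∑ i, f i ≤ ∑ i, g i := by
  have hsum : ∀ h : ι → ℝ, ∑ i, (h i + h (ν i)) = 2 * ∑ i, h i := fun h => by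
    rw [sum_add_distrib, hν.bijective.sum_comp h, two_mul]
  have := sum_le_sum fun i (_ : i ∈ univ) => hfg i
  rw [hsum f, hsum g] at this
  linarith

lemma ZeroSum.sum_eq_zero {μ : A → A} {τ : A → ℝ} (hμ : Function.Involutive μ)
    (hτ : ZeroSum μ τ) : ∑ a, τ a = 0 := by
  have hpair : ∀ a, τ a + τ (μ a) = 0 := fun a => by
    by_cases h : μ a = a
    · rw [h, hτ.2 a h, add_zero]
    · exact hτ.1 a h
  have := Finset.sum_eq_zero fun a (_ : a ∈ univ) => hpair a
  rw [sum_add_distrib, hμ.bijective.sum_comp τ] at this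
  linarith

lemma Stable.add_le_of_isMatchingOn {Mkt : TwoSidedMarket A} {u : A → A → ℝ} {μ μ' : A → A}
    {τ : A → ℝ} {S : Finset A} (hu : ∀ a, u a a = 0) (hstable : Stable Mkt u μ τ)
    (hμ' : IsMatchingOn Mkt S μ') (a : A) :
    u a (μ' a) + u (μ' a) a ≤ (u a (μ a) + τ a) + (u (μ' a) (μ (μ' a)) + τ (μ' a)) := by
  by_cases h : μ' a = a
  · rw [h, hu a]
    linarith [hstable.1 a]
  · rcases hμ'.2.2 a h with ⟨ha, ha'⟩ | ⟨ha, ha'⟩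
    · exact hstable.2 a ha (μ' a) ha'
    · linarith [hstable.2 (μ' a) ha' a ha]

/-- a stable outcome with zero-sum transfers has a maximum weight matching. -/
theorem stable_implies_max_weight
    (Mkt : TwoSidedMarket A) (u : A → A → ℝ) (μ : A → A) (τ : A → ℝ)
    (hu : ∀ a, u a a = 0)
    (hμ : IsMatchingOn Mkt Finset.univ μ)
    (hτ : ZeroSum μ τ)
    (hstable : Stable Mkt u μ τ) :
    ∀ μ' : A → A, IsMatchingOn Mkt Finset.univ μ' →
      ∑ a, u a (μ' a) ≤ ∑ a, u a (μ a) := by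
  intro μ' hμ'
  have hweight : ∑ a, u a (μ' a) ≤ ∑ a, (u a (μ a) + τ a) := by
    refine Function.Involutive.sum_le_sum_of_add_le hμ'.1 fun a => ?_
    rw [hμ'.1 a]
    exact hstable.add_le_of_isMatchingOn hu hμ' a
  rwa [sum_add_distrib, hτ.sum_eq_zero hμ.1, add_zero] at hweight
end

section
/- A market outcome (X, τ) with zero-sum transfers is stable if and only if its Subset Instability I(u, X, τ, A) equals zero. -/
open Finset

variable {A : Type*} [Fintype A] [DecidableEq A]

/-! Since `S = ∅` has excess `0`, the instability vanishes iff no coalition `S` has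
`maxWeight S` above its total payoff `∑ a ∈ S, (u a (μ a) + τ a)`. Coalitions of one or two
agents turn this into individual rationality and the absence of blocking pairs; conversely a
matching on `S` splits `S` into fixed points and cross pairs, each of which gets no more than its
payoff under a stable outcome. -/

theorem Finset.sum_nonpos_of_involution {ι M : Type*} [AddCommGroup M] [LinearOrder M]
    [IsOrderedAddMonoid M] {s : Finset ι} {σ : ι → ι} {g : ι → M}
    (hσ : ∀ a, σ (σ a) = a) (hs : ∀ a ∈ s, σ a ∈ s) (hg : ∀ a ∈ s, g a + g (σ a) ≤ 0) :
    ∑ a ∈ s, g a ≤ 0 := by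
  have hperm : ∑ a ∈ s, g (σ a) = ∑ a ∈ s, g a :=
    sum_nbij' σ σ hs hs (fun a _ => hσ a) (fun a _ => hσ a) fun _ _ => rfl
  have hdouble : ∑ a ∈ s, g a + ∑ a ∈ s, g a ≤ 0 :=
    calc ∑ a ∈ s, g a + ∑ a ∈ s, g a = ∑ a ∈ s, (g a + g (σ a)) := by rw [sum_add_distrib, hperm]
      _ ≤ 0 := sum_nonpos hg
  by_contra! hpos
  exact (add_pos hpos hpos).not_ge hdouble

namespace IsMatchingOn

variable {Mkt : TwoSidedMarket A}

theorem id (S : Finset A) : IsMatchingOn Mkt S id :=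
  ⟨fun _ => rfl, fun _ h => absurd rfl h, fun _ h => absurd rfl h⟩

theorem swap {m w : A} (hm : m ∈ Mkt.M) (hw : w ∈ Mkt.W) :
    IsMatchingOn Mkt {m, w} (Equiv.swap m w) := by
  have hmoved : ∀ a, Equiv.swap m w a ≠ a → a = m ∨ a = w := fun a ha => by
    by_contra! hna
    exact ha (Equiv.swap_apply_of_ne_of_ne hna.1 hna.2)
  refine ⟨Equiv.swap_apply_self m w, fun a ha => ?_, fun a ha => ?_⟩
  · rcases hmoved a ha with rfl | rfl <;> simp
  · rcases hmoved a ha with rfl | rfl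
    · exact Or.inl ⟨hm, by rwa [Equiv.swap_apply_left]⟩
    · exact Or.inr ⟨hw, by rwa [Equiv.swap_apply_right]⟩

theorem apply_mem {S : Finset A} {σ : A → A} (hσ : IsMatchingOn Mkt S σ) {a : A} (ha : a ∈ S) :
    σ a ∈ S := by
  by_cases hfix : σ a = a
  · rwa [hfix]
  · exact hσ.2.1 (σ a) fun h => hfix (by rw [hσ.1 a] at h; exact h.symm)

end IsMatchingOn

section

variable {Mkt : TwoSidedMarket A} {u : A → A → ℝ}

theorem bddAbove_matchingWeights (S : Finset A) :
    BddAbove {x | ∃ σ, IsMatchingOn Mkt S σ ∧ x = ∑ a ∈ S, u a (σ a)} :=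
  ((Set.finite_range fun σ : A → A => ∑ a ∈ S, u a (σ a)).subset
    (by rintro x ⟨σ, _, rfl⟩; exact ⟨σ, rfl⟩)).bddAbove

theorem sum_le_maxWeight {S : Finset A} {σ : A → A} (hσ : IsMatchingOn Mkt S σ) :
    ∑ a ∈ S, u a (σ a) ≤ maxWeight Mkt u S :=
  le_csSup (bddAbove_matchingWeights S) ⟨σ, hσ, rfl⟩

theorem maxWeight_le {S : Finset A} {c : ℝ}
    (h : ∀ σ, IsMatchingOn Mkt S σ → ∑ a ∈ S, u a (σ a) ≤ c) : maxWeight Mkt u S ≤ c :=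
  csSup_le ⟨_, id, IsMatchingOn.id S, rfl⟩ fun _ ⟨σ, hσ, hx⟩ => hx ▸ h σ hσ

theorem maxWeight_empty : maxWeight Mkt u ∅ = 0 :=
  le_antisymm (maxWeight_le fun _ _ => sum_empty.le) (sum_le_maxWeight (IsMatchingOn.id ∅))

variable {μ : A → A} {τ : A → ℝ}

theorem bddAbove_coalitionExcesses :
    BddAbove {x | ∃ S : Finset A, x = maxWeight Mkt u S - ∑ a ∈ S, (u a (μ a) + τ a)} :=
  ((Set.finite_range fun S : Finset A => maxWeight Mkt u S - ∑ a ∈ S, (u a (μ a) + τ a)).subset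
    (by rintro x ⟨S, rfl⟩; exact ⟨S, rfl⟩)).bddAbove

theorem instability_nonneg : 0 ≤ instability Mkt u μ τ :=
  le_csSup bddAbove_coalitionExcesses ⟨∅, by rw [maxWeight_empty, sum_empty, sub_zero]⟩

theorem instability_eq_zero_iff :
    instability Mkt u μ τ = 0 ↔ ∀ S, maxWeight Mkt u S ≤ ∑ a ∈ S, (u a (μ a) + τ a) := by
  rw [← instability_nonneg.ge_iff_eq', instability, csSup_le_iff bddAbove_coalitionExcesses
    ⟨_, ∅, rfl⟩]
  simp only [Set.mem_ofPred_eq, forall_exists_index, forall_eq_apply_imp_iff, sub_nonpos]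

theorem Stable.add_le_of_cross (hs : Stable Mkt u μ τ) {a b : A}
    (hab : (a ∈ Mkt.M ∧ b ∈ Mkt.W) ∨ (a ∈ Mkt.W ∧ b ∈ Mkt.M)) :
    u a b + u b a ≤ (u a (μ a) + τ a) + (u b (μ b) + τ b) := by
  rcases hab with ⟨ha, hb⟩ | ⟨ha, hb⟩
  · exact hs.2 a ha b hb
  · linarith [hs.2 b hb a ha]

theorem Stable.sum_le (hu : ∀ a, u a a = 0) (hs : Stable Mkt u μ τ) {S : Finset A} {σ : A → A}
    (hσ : IsMatchingOn Mkt S σ) : ∑ a ∈ S, u a (σ a) ≤ ∑ a ∈ S, (u a (μ a) + τ a) := by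
  rw [← sub_nonpos, ← sum_sub_distrib]
  refine sum_nonpos_of_involution hσ.1 (fun a => hσ.apply_mem) fun a _ => ?_
  by_cases hfix : σ a = a
  · simp only [hfix, hu]
    linarith [hs.1 a]
  · rw [hσ.1 a]
    linarith [hs.add_le_of_cross (hσ.2.2 a hfix)]

theorem stable_of_forall_maxWeight_le (hu : ∀ a, u a a = 0)
    (h : ∀ S, maxWeight Mkt u S ≤ ∑ a ∈ S, (u a (μ a) + τ a)) : Stable Mkt u μ τ := by
  refine ⟨fun a => ?_, fun m hm w hw => ?_⟩
  · have hsingle := (sum_le_maxWeight (u := u) (IsMatchingOn.id {a})).trans (h {a})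
    simpa [hu] using hsingle
  · have hmw : m ≠ w := fun h => disjoint_left.mp Mkt.disj hm (h ▸ hw)
    have hpair := (sum_le_maxWeight (u := u) (IsMatchingOn.swap hm hw)).trans (h {m, w})
    rwa [sum_pair hmw, sum_pair hmw, Equiv.swap_apply_left, Equiv.swap_apply_right] at hpair

end

theorem stable_iff_instability_eq_zero_general
    (Mkt : TwoSidedMarket A) (u : A → A → ℝ) (μ : A → A) (τ : A → ℝ)
    (hu : ∀ a, u a a = 0) :
    Stable Mkt u μ τ ↔ instability Mkt u μ τ = 0 := by
  rw [instability_eq_zero_iff]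
  exact ⟨fun hs S => maxWeight_le fun _ hσ => hs.sum_le hu hσ, stable_of_forall_maxWeight_le hu⟩

/-- an outcome with zero-sum transfers is stable iff its Subset Instability is zero. -/
theorem stable_iff_instability_eq_zero
    (Mkt : TwoSidedMarket A) (u : A → A → ℝ) (μ : A → A) (τ : A → ℝ)
    (hu : ∀ a, u a a = 0)
    (hμ : IsMatchingOn Mkt Finset.univ μ)
    (hτ : ZeroSum μ τ) :
    Stable Mkt u μ τ ↔ instability Mkt u μ τ = 0 :=
  stable_iff_instability_eq_zero_general Mkt u μ τ hu
end

section
/- Subset Instability is Lipschitz in the utilities: for any matching with zero-sum transfers (X, τ) and any two utility functions u and ũ, |I(u, X, τ, A) − I(ũ, X, τ, A)| ≤ 2 · Σ_{a∈A} ‖u_a − ũ_a‖_∞, where ‖u_a − ũ_a‖_∞ = max_{a'∈A} |u(a,a') − ũ(a,a')|. -/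
open Finset

variable {A : Type*} [Fintype A] [DecidableEq A]

/-!
Both suprema defining instability move by a controlled amount when `u` is replaced by `v`: every
agent's utility term `u a b` moves by at most `‖u_a - v_a‖_∞`. The value of a subset `S` contains
these terms twice, once in the best matching on `S` and once in the realized utilities of `S`,
hence the factor `2`.
-/

lemma ciSup_le_ciSup_add {ι α : Type*} [Nonempty ι] [ConditionallyCompleteLattice α] [Add α]
    [AddRightMono α] {f g : ι → α} {c : α} (hg : BddAbove (Set.range g))
    (h : ∀ i, f i ≤ g i + c) : ⨆ i, f i ≤ (⨆ i, g i) + c :=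
  ciSup_le fun i => (h i).trans (add_le_add_left (le_ciSup hg i) c)

section UtilityDist

omit [DecidableEq A]

variable [Nonempty A] (u v : A → A → ℝ)

/-- The sup-norm distance `‖u_a - v_a‖_∞` between the utility profiles of agent `a`. -/
noncomputable def utilityDist (a : A) : ℝ :=
  univ.sup' univ_nonempty fun a' => |u a a' - v a a'|

lemma utilityDist_comm (a : A) : utilityDist u v a = utilityDist v u a := by
  simp only [utilityDist, abs_sub_comm]

lemma abs_sub_le_utilityDist (a b : A) : |u a b - v a b| ≤ utilityDist u v a :=
  le_sup' (fun a' => |u a a' - v a a'|) (mem_univ b)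

lemma utilityDist_nonneg (a : A) : 0 ≤ utilityDist u v a :=
  (abs_nonneg _).trans (abs_sub_le_utilityDist u v a a)

lemma le_add_utilityDist (a b : A) : u a b ≤ v a b + utilityDist u v a := by
  linarith [le_abs_self (u a b - v a b), abs_sub_le_utilityDist u v a b]

end UtilityDist

section Instability

variable (Mkt : TwoSidedMarket A) (u v : A → A → ℝ)

lemma isMatchingOn_id (S : Finset A) : IsMatchingOn Mkt S id :=
  ⟨fun _ => rfl, fun _ h => absurd rfl h, fun _ h => absurd rfl h⟩

lemma maxWeight_eq_iSup (S : Finset A) :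
    maxWeight Mkt u S = ⨆ μ : {μ // IsMatchingOn Mkt S μ}, ∑ a ∈ S, u a (μ.1 a) := by
  rw [maxWeight, iSup]
  congr 1
  ext x
  simp [eq_comm]

lemma instability_eq_iSup (μ : A → A) (τ : A → ℝ) :
    instability Mkt u μ τ = ⨆ S : Finset A, (maxWeight Mkt u S - ∑ a ∈ S, (u a (μ a) + τ a)) := by
  rw [instability, iSup]
  congr 1
  ext x
  simp [eq_comm]

lemma maxWeight_le_add [Nonempty A] (S : Finset A) :
    maxWeight Mkt u S ≤ maxWeight Mkt v S + ∑ a ∈ S, utilityDist u v a := by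
  have : Nonempty {μ // IsMatchingOn Mkt S μ} := ⟨⟨id, isMatchingOn_id Mkt S⟩⟩
  rw [maxWeight_eq_iSup, maxWeight_eq_iSup]
  refine ciSup_le_ciSup_add (Finite.bddAbove_range _) fun μ => ?_
  rw [← sum_add_distrib]
  exact sum_le_sum fun a _ => le_add_utilityDist u v a (μ.1 a)

lemma instability_le_add [Nonempty A] (μ : A → A) (τ : A → ℝ) :
    instability Mkt u μ τ ≤ instability Mkt v μ τ + 2 * ∑ a, utilityDist u v a := by
  rw [instability_eq_iSup, instability_eq_iSup]
  refine ciSup_le_ciSup_add (Finite.bddAbove_range _) fun S => ?_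
  have hrealized : ∑ a ∈ S, (v a (μ a) + τ a) ≤
      ∑ a ∈ S, (u a (μ a) + τ a) + ∑ a ∈ S, utilityDist u v a := by
    rw [← sum_add_distrib]
    refine sum_le_sum fun a _ => ?_
    linarith [le_add_utilityDist v u a (μ a), utilityDist_comm u v a]
  have hsubset : ∑ a ∈ S, utilityDist u v a ≤ ∑ a, utilityDist u v a :=
    sum_le_univ_sum_of_nonneg (utilityDist_nonneg u v)
  linarith [maxWeight_le_add Mkt u v S]

end Instability

theorem instability_lipschitz_general [Nonempty A]
    (Mkt : TwoSidedMarket A) (u v : A → A → ℝ) (μ : A → A) (τ : A → ℝ) :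
    |instability Mkt u μ τ - instability Mkt v μ τ| ≤
      2 * ∑ a, Finset.univ.sup' Finset.univ_nonempty (fun a' => |u a a' - v a a'|) := by
  change _ ≤ 2 * ∑ a, utilityDist u v a
  have hvu := instability_le_add Mkt v u μ τ
  simp only [utilityDist_comm v u] at hvu
  exact abs_sub_le_iff.2 ⟨by linarith [instability_le_add Mkt u v μ τ], by linarith⟩

/-- Subset Instability is Lipschitz in the utilities. -/
theorem instability_lipschitz [Nonempty A]
    (Mkt : TwoSidedMarket A) (u v : A → A → ℝ) (μ : A → A) (τ : A → ℝ)
    (hu : ∀ a, u a a = 0) (hv : ∀ a, v a a = 0)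
    (hμ : IsMatchingOn Mkt Finset.univ μ)
    (hτ : ZeroSum μ τ) :
    |instability Mkt u μ τ - instability Mkt v μ τ| ≤
      2 * ∑ a, Finset.univ.sup' Finset.univ_nonempty (fun a' => |u a a' - v a a'|) :=
  instability_lipschitz_general Mkt u v μ τ
end

section
/- If the nonnegative subsidy vector s ∈ ℝ^A_{≥0} is such that the subsidized outcome (X, τ + s) is stable (individually rational and without blocking pairs), then the Subset Instability of (X, τ) is at most Σ_{a∈A} s_a. -/
open Finset

variable {A : Type*} [Fintype A] [DecidableEq A]

/-
A stable outcome is a feasible dual solution of the assignment LP: individual rationality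
bounds each unmatched agent's utility by its payoff, and the absence of blocking pairs bounds
each matched pair's joint utility by their joint payoff. Summing over the pairs of any matching
on `S` shows that its weight is at most the total payoff on `S`. Under the subsidized transfers
`τ + s` that payoff exceeds the one under `τ` by `∑ a ∈ S, s a ≤ ∑ a, s a`.
-/

theorem Finset.sum_comp_involution_of_mapsTo {α M : Type*} [AddCommMonoid M] {S : Finset α}
    {σ : α → α} (hσ : ∀ a, σ (σ a) = a) (hS : ∀ a ∈ S, σ a ∈ S) (g : α → M) :
    ∑ a ∈ S, g (σ a) = ∑ a ∈ S, g a :=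
  Finset.sum_nbij' σ σ hS hS (fun a _ => hσ a) (fun a _ => hσ a) fun _ _ => rfl

theorem Finset.sum_nonpos_of_add_comp_involution_nonpos {α M : Type*} [AddCommMonoid M]
    [LinearOrder M] [IsOrderedCancelAddMonoid M] {S : Finset α} {σ : α → α}
    (hσ : ∀ a, σ (σ a) = a) (hS : ∀ a ∈ S, σ a ∈ S) {g : α → M}
    (hg : ∀ a ∈ S, g a + g (σ a) ≤ 0) :
    ∑ a ∈ S, g a ≤ 0 := by
  have hdouble : ∑ a ∈ S, g a + ∑ a ∈ S, g a ≤ 0 := by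
    calc ∑ a ∈ S, g a + ∑ a ∈ S, g a
        = ∑ a ∈ S, (g a + g (σ a)) := by
          rw [Finset.sum_add_distrib, Finset.sum_comp_involution_of_mapsTo hσ hS]
      _ ≤ 0 := Finset.sum_nonpos hg
  by_contra! hpos
  exact (add_pos hpos hpos).not_ge hdouble

theorem IsMatchingOn.mapsTo {Mkt : TwoSidedMarket A} {S : Finset A} {ν : A → A}
    (hν : IsMatchingOn Mkt S ν) : ∀ a ∈ S, ν a ∈ S := by
  intro a ha
  by_cases hfix : ν a = a
  · rwa [hfix]
  · exact hν.2.1 (ν a) (by rwa [hν.1 a, ne_comm])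

namespace Stable

variable {Mkt : TwoSidedMarket A} {u : A → A → ℝ} {μ : A → A} {t : A → ℝ}

theorem pair_utility_le (hu : ∀ a, u a a = 0) (hstable : Stable Mkt u μ t) {S : Finset A}
    {ν : A → A} (hν : IsMatchingOn Mkt S ν) (a : A) :
    u a (ν a) + u (ν a) a ≤ (u a (μ a) + t a) + (u (ν a) (μ (ν a)) + t (ν a)) := by
  by_cases hfix : ν a = a
  · rw [hfix, hu]
    linarith [hstable.1 a]
  · rcases hν.2.2 a hfix with ⟨hM, hW⟩ | ⟨hW, hM⟩
    · exact hstable.2 a hM (ν a) hW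
    · linarith [hstable.2 (ν a) hM a hW]

theorem sum_utility_le (hu : ∀ a, u a a = 0) (hstable : Stable Mkt u μ t) {S : Finset A}
    {ν : A → A} (hν : IsMatchingOn Mkt S ν) :
    ∑ a ∈ S, u a (ν a) ≤ ∑ a ∈ S, (u a (μ a) + t a) := by
  have hsurplus : ∑ a ∈ S, (u a (ν a) - (u a (μ a) + t a)) ≤ 0 :=
    Finset.sum_nonpos_of_add_comp_involution_nonpos hν.1 hν.mapsTo fun a _ => by
      have hpair := pair_utility_le hu hstable hν a
      rw [hν.1 a]
      linarith
  rwa [Finset.sum_sub_distrib, sub_nonpos] at hsurplus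

theorem maxWeight_le (hu : ∀ a, u a a = 0) (hstable : Stable Mkt u μ t) (S : Finset A) :
    maxWeight Mkt u S ≤ ∑ a ∈ S, (u a (μ a) + t a) :=
  Real.sSup_le (by rintro _ ⟨ν, hν, rfl⟩; exact hstable.sum_utility_le hu hν)
    (Finset.sum_nonneg fun a _ => hstable.1 a)

end Stable

theorem instability_le_total_subsidy_general
    (Mkt : TwoSidedMarket A) (u : A → A → ℝ) (μ : A → A) (τ : A → ℝ) (s : A → ℝ)
    (hu : ∀ a, u a a = 0)
    (hs : ∀ a, 0 ≤ s a)
    (hstable : Stable Mkt u μ (fun a => τ a + s a)) :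
    instability Mkt u μ τ ≤ ∑ a, s a := by
  refine Real.sSup_le ?_ (Finset.sum_nonneg fun a _ => hs a)
  rintro _ ⟨S, rfl⟩
  have hweight := hstable.maxWeight_le hu S
  have hsubset : ∑ a ∈ S, s a ≤ ∑ a, s a :=
    Finset.sum_le_sum_of_subset_of_nonneg (Finset.subset_univ S) fun a _ _ => hs a
  simp only [← add_assoc] at hweight
  rw [Finset.sum_add_distrib] at hweight
  linarith

/-- if subsidies `s ≥ 0` make `(X, τ + s)` stable, then
Subset Instability is at most the total subsidy. -/
theorem instability_le_total_subsidy
    (Mkt : TwoSidedMarket A) (u : A → A → ℝ) (μ : A → A) (τ : A → ℝ) (s : A → ℝ)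
    (hu : ∀ a, u a a = 0)
    (hμ : IsMatchingOn Mkt Finset.univ μ)
    (hτ : ZeroSum μ τ)
    (hs : ∀ a, 0 ≤ s a)
    (hstable : Stable Mkt u μ (fun a => τ a + s a)) :
    instability Mkt u μ τ ≤ ∑ a, s a :=
  instability_le_total_subsidy_general Mkt u μ τ s hu hs hstable
end

section
/- If (Z, p) is an optimal primal-dual pair for the matching LP and its dual with Z an integral matching indicator, then the market outcome (X, τ) with X the matching given by Z and transfers τ_a = p_a − u_a(μ_X(a)) for matched a and τ_a = 0 for unmatched a is a stable matching with zero-sum transfers. -/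
open Finset

variable {A : Type*} [Fintype A] [DecidableEq A]

/-!
Let `s a = p a - u a (μ a)` be the slack of agent `a`. Dual feasibility gives
`s a + s (μ a) ≥ 0` for every agent (for an unmatched one this reads `2 p a ≥ 0`), while
optimality says `∑ s = 0`, so `∑ a, (s a + s (μ a)) = 2 ∑ s = 0` forces every
`s a + s (μ a)` to vanish: this is complementary slackness. Hence unmatched agents have zero
dual price, every agent's payoff `u a (μ a) + τ a` is exactly `p a`, and individual
rationality and the absence of blocking pairs become `p ≥ 0` and dual feasibility.
-/

theorem Function.Involutive.add_apply_eq_zero_of_sum_eq_zero {ι M : Type*} [Fintype ι]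
    [AddCommMonoid M] [PartialOrder M] [IsOrderedAddMonoid M] {μ : ι → ι}
    (hμ : Function.Involutive μ) {f : ι → M} (hf : ∀ i, 0 ≤ f i + f (μ i))
    (hsum : ∑ i, f i = 0) (i : ι) : f i + f (μ i) = 0 := by
  have hpaired : ∑ i, (f i + f (μ i)) = 0 := by
    rw [sum_add_distrib, hμ.bijective.sum_comp f, hsum, add_zero]
  exact congrFun ((Fintype.sum_eq_zero_iff_of_nonneg hf).mp hpaired) i

def dualSlack (u : A → A → ℝ) (μ : A → A) (p : A → ℝ) (a : A) : ℝ :=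
  p a - u a (μ a)

def dualTransfer (u : A → A → ℝ) (μ : A → A) (p : A → ℝ) (a : A) : ℝ :=
  if μ a = a then 0 else dualSlack u μ p a

section DualOptimal

variable {Mkt : TwoSidedMarket A} {u : A → A → ℝ} {μ : A → A} {p : A → ℝ}

omit [Fintype A] [DecidableEq A] in
theorem dualSlack_of_apply_eq_self (hu : ∀ a, u a a = 0) {a : A} (hfixed : μ a = a) :
    dualSlack u μ p a = p a := by
  rw [dualSlack, hfixed, hu a, sub_zero]

theorem dualSlack_add_dualSlack_apply_nonneg (hu : ∀ a, u a a = 0)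
    (hμ : IsMatchingOn Mkt Finset.univ μ) (hp0 : ∀ a, 0 ≤ p a)
    (hpfeas : ∀ m ∈ Mkt.M, ∀ w ∈ Mkt.W, u m w + u w m ≤ p m + p w) (a : A) :
    0 ≤ dualSlack u μ p a + dualSlack u μ p (μ a) := by
  obtain ⟨hinv, -, hside⟩ := hμ
  by_cases hfixed : μ a = a
  · rw [hfixed, dualSlack_of_apply_eq_self hu hfixed]
    linarith [hp0 a]
  · rcases hside a hfixed with ⟨hm, hw⟩ | ⟨hw, hm⟩
    · rw [dualSlack, dualSlack, hinv a]
      linarith [hpfeas a hm (μ a) hw]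
    · rw [dualSlack, dualSlack, hinv a]
      linarith [hpfeas (μ a) hm a hw]

theorem dualSlack_add_dualSlack_apply_eq_zero (hu : ∀ a, u a a = 0)
    (hμ : IsMatchingOn Mkt Finset.univ μ) (hp0 : ∀ a, 0 ≤ p a)
    (hpfeas : ∀ m ∈ Mkt.M, ∀ w ∈ Mkt.W, u m w + u w m ≤ p m + p w)
    (hopt : ∑ a, p a = ∑ a, u a (μ a)) (a : A) :
    dualSlack u μ p a + dualSlack u μ p (μ a) = 0 :=
  Function.Involutive.add_apply_eq_zero_of_sum_eq_zero hμ.1 (f := dualSlack u μ p)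
    (dualSlack_add_dualSlack_apply_nonneg hu hμ hp0 hpfeas)
    (by simp only [dualSlack, sum_sub_distrib, hopt, sub_self]) a

omit [Fintype A] in
theorem payoff_add_dualTransfer_eq (hu : ∀ a, u a a = 0)
    (hslack : ∀ a, dualSlack u μ p a + dualSlack u μ p (μ a) = 0) (a : A) :
    u a (μ a) + dualTransfer u μ p a = p a := by
  by_cases hfixed : μ a = a
  · have hunmatched := hslack a
    rw [hfixed, dualSlack_of_apply_eq_self hu hfixed] at hunmatched
    rw [dualTransfer, if_pos hfixed, hfixed, hu a]
    linarith
  · rw [dualTransfer, if_neg hfixed, dualSlack]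
    ring

omit [Fintype A] in
theorem zeroSum_dualTransfer (hinv : Function.Involutive μ)
    (hslack : ∀ a, dualSlack u μ p a + dualSlack u μ p (μ a) = 0) :
    ZeroSum μ (dualTransfer u μ p) := by
  refine ⟨fun a hmatched => ?_, fun a hfixed => if_pos hfixed⟩
  have hpartner : μ (μ a) ≠ μ a := by rwa [hinv a, ne_comm]
  rw [dualTransfer, dualTransfer, if_neg hmatched, if_neg hpartner]
  exact hslack a

theorem stable_of_payoff_eq_dual {τ : A → ℝ} (hpayoff : ∀ a, u a (μ a) + τ a = p a)
    (hp0 : ∀ a, 0 ≤ p a)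
    (hpfeas : ∀ m ∈ Mkt.M, ∀ w ∈ Mkt.W, u m w + u w m ≤ p m + p w) :
    Stable Mkt u μ τ := by
  refine ⟨fun a => ?_, fun m hm w hw => ?_⟩
  · exact (hpayoff a).symm ▸ hp0 a
  · rw [hpayoff m, hpayoff w]
    exact hpfeas m hm w hw

end DualOptimal

/-- an optimal primal-dual pair, with the primal being the indicator of a
matching `μ`, yields a stable outcome with zero-sum transfers `τ_a = p_a - u_a(μ(a))`. -/
theorem primal_dual_optimal_gives_stable
    (Mkt : TwoSidedMarket A) (u : A → A → ℝ) (μ : A → A) (p : A → ℝ)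
    (hu : ∀ a, u a a = 0)
    (hμ : IsMatchingOn Mkt Finset.univ μ)
    (hp0 : ∀ a, 0 ≤ p a)
    (hpfeas : ∀ m ∈ Mkt.M, ∀ w ∈ Mkt.W, u m w + u w m ≤ p m + p w)
    (hopt : ∑ a, p a = ∑ a, u a (μ a)) :
    ZeroSum μ (fun a => if μ a = a then 0 else p a - u a (μ a)) ∧
      Stable Mkt u μ (fun a => if μ a = a then 0 else p a - u a (μ a)) := by
  have hslack := dualSlack_add_dualSlack_apply_eq_zero hu hμ hp0 hpfeas hopt
  exact ⟨zeroSum_dualTransfer hμ.1 hslack,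
    stable_of_payoff_eq_dual (payoff_add_dualTransfer_eq hu hslack) hp0 hpfeas⟩
end

section
/- Suppose every confidence interval contains the true utility and u^UCB denotes the upper endpoints. If X^UCB is a maximum weight matching with respect to u^UCB and the total width of confidence intervals along X^UCB is at most 0.1·Δ, where Δ is the gap between the best and second-best matchings under the true utilities u, then X^UCB equals the (unique) maximum weight matching with respect to u. -/
/-! Upper confidence bounds dominate the true utilities, so
`Σ u(X^opt) ≤ Σ u^UCB(X^opt) ≤ Σ u^UCB(X^UCB) ≤ Σ u(X^UCB) + width(X^UCB)`,
and the width is at most `0.1 Δ`. If `X^UCB ≠ X^opt`, it would lose at least `Δ > 0.1 Δ`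
in true utility, a contradiction. -/

open Finset

variable {A : Type*} [Fintype A] [DecidableEq A]

lemma le_ucb {α : Type*} {u v : α → α → ℝ} {C : α → α → Set ℝ}
    (hu : ∀ a, u a a = 0) (hbdd : ∀ a a', BddAbove (C a a'))
    (hmem : ∀ a a', u a a' ∈ C a a') (hv : ∀ a a', a ≠ a' → v a a' = sSup (C a a'))
    (hvdiag : ∀ a, v a a = 0) (a a' : α) : u a a' ≤ v a a' := by
  by_cases h : a = a'
  · subst h
    rw [hu, hvdiag]
  · rw [hv a a' h]
    exact le_csSup (hbdd a a') (hmem a a')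

lemma sum_ucb_sub_le_sum_width {u v : A → A → ℝ} {C : A → A → Set ℝ}
    (hu : ∀ a, u a a = 0) (hbdd : ∀ a a', BddBelow (C a a'))
    (hmem : ∀ a a', u a a' ∈ C a a') (hv : ∀ a a', a ≠ a' → v a a' = sSup (C a a'))
    (hvdiag : ∀ a, v a a = 0) (μ : A → A) :
    ∑ a, v a (μ a) - ∑ a, u a (μ a) ≤
      ∑ a ∈ univ.filter (fun a => μ a ≠ a), (sSup (C a (μ a)) - sInf (C a (μ a))) := by
  have unmatched_zero : ∀ a ∈ univ, a ∉ univ.filter (fun a => μ a ≠ a) →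
      v a (μ a) - u a (μ a) = 0 := by
    intro a _ ha
    simp only [mem_filter, mem_univ, true_and, not_not] at ha
    rw [ha, hu, hvdiag, sub_zero]
  rw [← sum_sub_distrib, ← sum_subset (filter_subset _ _) unmatched_zero]
  refine sum_le_sum fun a ha => ?_
  have hμa : a ≠ μ a := fun h => (mem_filter.1 ha).2 h.symm
  rw [hv a (μ a) hμa]
  linarith [csInf_le (hbdd a (μ a)) (hmem a (μ a))]

lemma sInf_gap_le {Mkt : TwoSidedMarket A} {u : A → A → ℝ} {μopt μ : A → A}
    (hunique : ∀ μ', IsMatchingOn Mkt univ μ' → μ' ≠ μopt →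
      ∑ a, u a (μ' a) < ∑ a, u a (μopt a))
    (hμ : IsMatchingOn Mkt univ μ) (hne : μ ≠ μopt) :
    sInf {x | ∃ μ', IsMatchingOn Mkt univ μ' ∧ μ' ≠ μopt ∧
        x = ∑ a, u a (μopt a) - ∑ a, u a (μ' a)} ≤
      ∑ a, u a (μopt a) - ∑ a, u a (μ a) := by
  refine csInf_le ⟨0, ?_⟩ ⟨μ, hμ, hne, rfl⟩
  rintro x ⟨μ', hμ', hne', rfl⟩
  exact sub_nonneg.2 (hunique μ' hμ' hne').le

/-- if the total width of the confidence intervals along the UCB-optimal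
matching is at most `0.1 Δ`, the UCB-optimal matching is the true optimal matching. -/
theorem ucb_matching_eq_true_opt
    (Mkt : TwoSidedMarket A) (u v : A → A → ℝ) (C : A → A → Set ℝ)
    (μopt μucb : A → A)
    (hu : ∀ a, u a a = 0)
    (hC : ∀ a a', (C a a').Nonempty ∧ IsCompact (C a a'))
    (hmem : ∀ a a', u a a' ∈ C a a')
    (hv : ∀ a a', a ≠ a' → v a a' = sSup (C a a'))
    (hvdiag : ∀ a, v a a = 0)
    (hopt : IsMatchingOn Mkt Finset.univ μopt)
    (hunique : ∀ μ', IsMatchingOn Mkt Finset.univ μ' → μ' ≠ μopt →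
      ∑ a, u a (μ' a) < ∑ a, u a (μopt a))
    (Δ : ℝ)
    (hΔ : Δ = sInf {x | ∃ μ', IsMatchingOn Mkt Finset.univ μ' ∧ μ' ≠ μopt ∧
        x = ∑ a, u a (μopt a) - ∑ a, u a (μ' a)})
    (hΔpos : 0 < Δ)
    (hucb : IsMatchingOn Mkt Finset.univ μucb)
    (hucbmax : ∀ μ', IsMatchingOn Mkt Finset.univ μ' →
      ∑ a, v a (μ' a) ≤ ∑ a, v a (μucb a))
    (hwidth : ∑ a ∈ Finset.univ.filter (fun a => μucb a ≠ a),
        (sSup (C a (μucb a)) - sInf (C a (μucb a))) ≤ 0.1 * Δ) :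
    μucb = μopt := by
  by_contra hne
  have gap_le : Δ ≤ ∑ a, u a (μopt a) - ∑ a, u a (μucb a) :=
    hΔ ▸ sInf_gap_le hunique hucb hne
  have opt_le_ucb : ∑ a, u a (μopt a) ≤ ∑ a, v a (μopt a) :=
    sum_le_sum fun a _ =>
      le_ucb hu (fun a a' => (hC a a').2.bddAbove) hmem hv hvdiag a (μopt a)
  have regret_le : ∑ a, v a (μucb a) - ∑ a, u a (μucb a) ≤ 0.1 * Δ :=
    (sum_ucb_sub_le_sum_width hu (fun a a' => (hC a a').2.bddBelow) hmem hv hvdiag μucb).trans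
      hwidth
  linarith [hucbmax μopt hopt]
end

section
/- NTU Subset Instability is nonnegative, and it equals zero if and only if the matching X is stable in the non-transferable-utility sense. -/
open Finset

variable {A : Type*} [Fintype A] [DecidableEq A]

/-- NTU stability of a matching `μ`: individual rationality and no pair where both
agents strictly prefer each other. -/
def NTUStable (Mkt : TwoSidedMarket A) (u : A → A → ℝ) (μ : A → A) : Prop :=
  (∀ a, 0 ≤ u a (μ a)) ∧
  (∀ m ∈ Mkt.M, ∀ w ∈ Mkt.W,
    min (u m w - u m (μ m)) (u w m - u w (μ w)) ≤ 0)

/-- NTU Subset Instability: minimum total nonnegative subsidy making the matching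
individually rational and free of blocking pairs. -/
noncomputable def ntuInstability (Mkt : TwoSidedMarket A) (u : A → A → ℝ) (μ : A → A) : ℝ :=
  sInf {x | ∃ s : A → ℝ, (∀ a, 0 ≤ s a) ∧
    (∀ m ∈ Mkt.M, ∀ w ∈ Mkt.W,
      min (u m w - u m (μ m) - s m) (u w m - u w (μ w) - s w) ≤ 0) ∧
    (∀ a, 0 ≤ u a (μ a) + s a) ∧ x = ∑ a, s a}

/-!
The zero subsidy is feasible exactly when `μ` is NTU-stable. Conversely, an agent `a` with
`u a (μ a) < 0` forces every feasible subsidy to total at least `-u a (μ a)`, and a blocking pair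
`(m, w)` forces a total of at least the smaller of their two gains; so an unstable matching has a
positive lower bound on its feasible totals. A large constant subsidy is feasible, so that this
bound passes to the infimum.
-/

def IsNTUSubsidy (Mkt : TwoSidedMarket A) (u : A → A → ℝ) (μ : A → A) (s : A → ℝ) :
    Prop :=
  (∀ a, 0 ≤ s a) ∧
    (∀ m ∈ Mkt.M, ∀ w ∈ Mkt.W,
      min (u m w - u m (μ m) - s m) (u w m - u w (μ w) - s w) ≤ 0) ∧
    (∀ a, 0 ≤ u a (μ a) + s a)

section

variable {Mkt : TwoSidedMarket A} {u : A → A → ℝ} {μ : A → A} {s : A → ℝ}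

theorem ntuInstability_eq_sInf_image :
    ntuInstability Mkt u μ = sInf ((fun s => ∑ a, s a) '' {s | IsNTUSubsidy Mkt u μ s}) := by
  unfold ntuInstability IsNTUSubsidy
  congr 1
  ext x
  simp only [Set.mem_ofPred_eq, Set.mem_image, and_assoc, eq_comm]

theorem isNTUSubsidy_zero_iff : IsNTUSubsidy Mkt u μ 0 ↔ NTUStable Mkt u μ := by
  simp [IsNTUSubsidy, NTUStable, and_comm]

theorem exists_isNTUSubsidy : ∃ s, IsNTUSubsidy Mkt u μ s := by
  set C := ∑ p : A × A, |u p.1 p.2|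
  have hu : ∀ x y, |u x y| ≤ C := fun x y =>
    single_le_sum (f := fun p : A × A => |u p.1 p.2|) (fun _ _ => abs_nonneg _) (mem_univ (x, y))
  have hC : 0 ≤ C := Finset.sum_nonneg fun _ _ => abs_nonneg _
  refine ⟨fun _ => 2 * C, fun _ => by linarith, fun m _ w _ => ?_, fun a => ?_⟩
  · linarith [min_le_left (u m w - u m (μ m) - 2 * C) (u w m - u w (μ w) - 2 * C),
      abs_le.mp (hu m w), abs_le.mp (hu m (μ m))]
  · linarith [abs_le.mp (hu a (μ a))]

theorem IsNTUSubsidy.sum_nonneg (hs : IsNTUSubsidy Mkt u μ s) : 0 ≤ ∑ a, s a :=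
  Finset.sum_nonneg fun a _ => hs.1 a

theorem IsNTUSubsidy.neg_utility_le_sum (hs : IsNTUSubsidy Mkt u μ s) (a : A) :
    -u a (μ a) ≤ ∑ b, s b :=
  calc -u a (μ a) ≤ s a := by linarith [hs.2.2 a]
    _ ≤ ∑ b, s b := single_le_sum (fun b _ => hs.1 b) (mem_univ a)

theorem IsNTUSubsidy.min_gain_le_sum (hs : IsNTUSubsidy Mkt u μ s) {m w : A} (hm : m ∈ Mkt.M)
    (hw : w ∈ Mkt.W) : min (u m w - u m (μ m)) (u w m - u w (μ w)) ≤ ∑ b, s b := by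
  have hsm := single_le_sum (fun b _ => hs.1 b) (mem_univ m)
  have hsw := single_le_sum (fun b _ => hs.1 b) (mem_univ w)
  rcases min_le_iff.mp (hs.2.1 m hm w hw) with h | h
  · linarith [min_le_left (u m w - u m (μ m)) (u w m - u w (μ w))]
  · linarith [min_le_right (u m w - u m (μ m)) (u w m - u w (μ w))]

theorem exists_pos_le_sum_of_not_ntuStable (h : ¬NTUStable Mkt u μ) :
    ∃ ε > 0, ∀ s, IsNTUSubsidy Mkt u μ s → ε ≤ ∑ a, s a := by
  unfold NTUStable at h
  push Not at h
  by_cases hIR : ∀ a, 0 ≤ u a (μ a)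
  · obtain ⟨m, hm, w, hw, hblock⟩ := h hIR
    exact ⟨_, hblock, fun s hs => hs.min_gain_le_sum hm hw⟩
  · push Not at hIR
    obtain ⟨a, ha⟩ := hIR
    exact ⟨-u a (μ a), by linarith, fun s hs => hs.neg_utility_le_sum a⟩

theorem zero_mem_lowerBounds_sum_image :
    0 ∈ lowerBounds ((fun s => ∑ a, s a) '' {s | IsNTUSubsidy Mkt u μ s}) := by
  rintro _ ⟨s, hs, rfl⟩
  exact hs.sum_nonneg

theorem ntuInstability_nonneg : 0 ≤ ntuInstability Mkt u μ := by
  rw [ntuInstability_eq_sInf_image]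
  exact Real.sInf_nonneg zero_mem_lowerBounds_sum_image

theorem ntuInstability_eq_zero_of_ntuStable (h : NTUStable Mkt u μ) :
    ntuInstability Mkt u μ = 0 := by
  refine le_antisymm ?_ ntuInstability_nonneg
  rw [ntuInstability_eq_sInf_image]
  exact csInf_le ⟨0, zero_mem_lowerBounds_sum_image⟩ ⟨0, isNTUSubsidy_zero_iff.mpr h, by simp⟩

theorem ntuInstability_pos_of_not_ntuStable (h : ¬NTUStable Mkt u μ) :
    0 < ntuInstability Mkt u μ := by
  obtain ⟨ε, hε, hε_le⟩ := exists_pos_le_sum_of_not_ntuStable h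
  rw [ntuInstability_eq_sInf_image]
  refine hε.trans_le (le_csInf (Set.Nonempty.image _ exists_isNTUSubsidy) ?_)
  rintro _ ⟨s, hs, rfl⟩
  exact hε_le s hs

end

theorem ntuInstability_nonneg_and_eq_zero_iff_general
    (Mkt : TwoSidedMarket A) (u : A → A → ℝ) (μ : A → A) :
    0 ≤ ntuInstability Mkt u μ ∧
      (ntuInstability Mkt u μ = 0 ↔ NTUStable Mkt u μ) :=
  ⟨ntuInstability_nonneg,
    fun h0 => by_contra fun h => (ntuInstability_pos_of_not_ntuStable h).ne' h0,
    ntuInstability_eq_zero_of_ntuStable⟩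

/-- NTU Subset Instability is nonnegative, and zero iff the matching is
NTU-stable. -/
theorem ntuInstability_nonneg_and_eq_zero_iff
    (Mkt : TwoSidedMarket A) (u : A → A → ℝ) (μ : A → A)
    (hu : ∀ a, u a a = 0)
    (hμ : IsMatchingOn Mkt Finset.univ μ) :
    0 ≤ ntuInstability Mkt u μ ∧
      (ntuInstability Mkt u μ = 0 ↔ NTUStable Mkt u μ) :=
  ntuInstability_nonneg_and_eq_zero_iff_general Mkt u μ
end

section
/- NTU confidence-set lemma: suppose each confidence interval C_{a,a'} contains the true utility u(a,a'), and let u^UCB(a,a') = max C_{a,a'}. If the matching X^UCB is NTU-stable with respect to u^UCB, then I^NTU(u, X^UCB) ≤ Σ_{a∈A, μ_{X^UCB}(a)≠a} (max C_{a,μ_{X^UCB}(a)} − min C_{a,μ_{X^UCB}(a)}). -/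
open Finset

variable {A : Type*} [Fintype A] [DecidableEq A]

/-!
Subsidize every agent by its optimism gap `v a (μ a) - u a (μ a)` at its own partner. Then
true utility plus subsidy equals the optimistic utility at the match, while the optimistic
utility of every deviation dominates the true one, so NTU-stability for `v` carries over to the
subsidized true utilities. Each gap is at most the width of the corresponding confidence set.
-/

section Subsidy

variable {Mkt : TwoSidedMarket A} {u v : A → A → ℝ} {μ : A → A}

theorem ntuInstability_le_sum_of_subsidy (s : A → ℝ) (hs : ∀ a, 0 ≤ s a)
    (hblock : ∀ m ∈ Mkt.M, ∀ w ∈ Mkt.W,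
      min (u m w - u m (μ m) - s m) (u w m - u w (μ w) - s w) ≤ 0)
    (hir : ∀ a, 0 ≤ u a (μ a) + s a) :
    ntuInstability Mkt u μ ≤ ∑ a, s a :=
  csInf_le ⟨0, by rintro x ⟨s', hs', -, -, rfl⟩; exact sum_nonneg fun a _ => hs' a⟩
    ⟨s, hs, hblock, hir, rfl⟩

theorem ntuInstability_le_sum_sub_of_le_of_ntuStable (huv : ∀ a a', u a a' ≤ v a a')
    (hv : NTUStable Mkt v μ) :
    ntuInstability Mkt u μ ≤ ∑ a, (v a (μ a) - u a (μ a)) := by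
  refine ntuInstability_le_sum_of_subsidy _ (fun a => sub_nonneg.2 (huv a (μ a))) ?_ ?_
  · intro m hm w hw
    calc min (u m w - u m (μ m) - (v m (μ m) - u m (μ m)))
          (u w m - u w (μ w) - (v w (μ w) - u w (μ w)))
        ≤ min (v m w - v m (μ m)) (v w m - v w (μ w)) :=
          min_le_min (by linarith [huv m w]) (by linarith [huv w m])
      _ ≤ 0 := hv.2 m hm w hw
  · intro a
    rw [add_sub_cancel]
    exact hv.1 a

end Subsidy

theorem ntuInstability_le_confidence_widths_general
    (Mkt : TwoSidedMarket A) (u v : A → A → ℝ) (μ : A → A)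
    (C : A → A → Set ℝ)
    (hC : ∀ a a', (C a a').Nonempty ∧ IsCompact (C a a'))
    (hmem : ∀ a a', u a a' ∈ C a a')
    (hu : ∀ a, u a a = 0)
    (hv : ∀ a a', a ≠ a' → v a a' = sSup (C a a'))
    (hvdiag : ∀ a, v a a = 0)
    (hstable : NTUStable Mkt v μ) :
    ntuInstability Mkt u μ ≤
      ∑ a ∈ Finset.univ.filter (fun a => μ a ≠ a),
        (sSup (C a (μ a)) - sInf (C a (μ a))) := by
  have huv : ∀ a a', u a a' ≤ v a a' := by
    intro a a'
    rcases eq_or_ne a a' with rfl | hne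
    · rw [hu, hvdiag]
    · rw [hv a a' hne]
      exact le_csSup (hC a a').2.bddAbove (hmem a a')
  refine (ntuInstability_le_sum_sub_of_le_of_ntuStable huv hstable).trans ?_
  rw [Finset.sum_filter]
  refine Finset.sum_le_sum fun a _ => ?_
  split_ifs with hmatched
  · rw [hv a (μ a) (Ne.symm hmatched)]
    linarith [csInf_le (hC a (μ a)).2.bddBelow (hmem a (μ a))]
  · rw [not_not.1 hmatched, hu, hvdiag, sub_zero]

/-- if confidence sets contain the true utilities and the matching is
NTU-stable with respect to the UCB utilities, then the true NTU Subset Instability is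
at most the total width of the confidence sets along the matching. -/
theorem ntuInstability_le_confidence_widths
    (Mkt : TwoSidedMarket A) (u v : A → A → ℝ) (μ : A → A)
    (C : A → A → Set ℝ)
    (hC : ∀ a a', (C a a').Nonempty ∧ IsCompact (C a a'))
    (hmem : ∀ a a', u a a' ∈ C a a')
    (hu : ∀ a, u a a = 0)
    (hv : ∀ a a', a ≠ a' → v a a' = sSup (C a a'))
    (hvdiag : ∀ a, v a a = 0)
    (hμ : IsMatchingOn Mkt Finset.univ μ)
    (hstable : NTUStable Mkt v μ) :
    ntuInstability Mkt u μ ≤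
      ∑ a ∈ Finset.univ.filter (fun a => μ a ≠ a),
        (sSup (C a (μ a)) - sInf (C a (μ a))) :=
  ntuInstability_le_confidence_widths_general Mkt u v μ C hC hmem hu hv hvdiag hstable
end

section
/- Search-frictions stability: suppose confidence sets contain the true utilities and (X, τ*) is stable with respect to u^UCB (upper endpoints). Define shifted transfers τ'_a = τ*_a + (max C_{a,μ_X(a)} − min C_{a,μ_X(a)}) for matched a. Then (X, τ') is stable with respect to the true utilities u; consequently, for any ε ≥ 0, the transfers τ_a = τ'_a − ε form an ε-stable outcome, i.e., u_a(μ_X(a)) + τ_a ≥ −ε for all a and u_m(w) + u_w(m) − 2ε ≤ (u_m(μ_X(m)) + τ_m) + (u_w(μ_X(w)) + τ_w) for all (m,w). -/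
/-!
Replacing `u^UCB` by `u` can only shrink the left-hand side of a blocking-pair inequality,
since `u ≤ max C = u^UCB` pointwise. On the right-hand side, a matched agent loses at most
`max C - u ≤ max C - min C` of utility, which the widened transfer makes up for; unmatched
agents get `0` in both. Hence every stability inequality for `(X, τ*)` under `u^UCB` yields the
corresponding one for `(X, τ')` under `u`, and lowering all transfers by `ε` costs `ε` per agent.
-/

open Finset

variable {A : Type*} [Fintype A] [DecidableEq A]

theorem TwoSidedMarket.ne_of_mem_M_of_mem_W (Mkt : TwoSidedMarket A) {m w : A}
    (hm : m ∈ Mkt.M) (hw : w ∈ Mkt.W) : m ≠ w := by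
  rintro rfl
  exact Finset.disjoint_left.mp Mkt.disj hm hw

def EpsStable (Mkt : TwoSidedMarket A) (u : A → A → ℝ) (μ : A → A) (τ : A → ℝ) (ε : ℝ) :
    Prop :=
  (∀ a, -ε ≤ u a (μ a) + τ a) ∧
  (∀ m ∈ Mkt.M, ∀ w ∈ Mkt.W,
    u m w + u w m - 2 * ε ≤ (u m (μ m) + τ m) + (u w (μ w) + τ w))

theorem Stable.of_le {Mkt : TwoSidedMarket A} {u v : A → A → ℝ} {μ : A → A} {τ τ' : A → ℝ}
    (hstable : Stable Mkt v μ τ) (huv : ∀ m ∈ Mkt.M, ∀ w ∈ Mkt.W, u m w ≤ v m w ∧ u w m ≤ v w m)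
    (hpay : ∀ a, v a (μ a) + τ a ≤ u a (μ a) + τ' a) :
    Stable Mkt u μ τ' := by
  refine ⟨fun a => (hstable.1 a).trans (hpay a), fun m hm w hw => ?_⟩
  obtain ⟨hmw, hwm⟩ := huv m hm w hw
  linarith [hstable.2 m hm w hw, hpay m, hpay w]

theorem Stable.epsStable_sub {Mkt : TwoSidedMarket A} {u : A → A → ℝ} {μ : A → A}
    {τ : A → ℝ} (h : Stable Mkt u μ τ) (ε : ℝ) :
    EpsStable Mkt u μ (fun a => τ a - ε) ε :=
  ⟨fun a => by linarith [h.1 a], fun m hm w hw => by linarith [h.2 m hm w hw]⟩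

theorem search_frictions_stability_general
    (Mkt : TwoSidedMarket A) (u v : A → A → ℝ) (μ : A → A) (τstar : A → ℝ)
    (C : A → A → Set ℝ)
    (hC : ∀ a a', (C a a').Nonempty ∧ IsCompact (C a a'))
    (hmem : ∀ a a', u a a' ∈ C a a')
    (hu : ∀ a, u a a = 0)
    (hv : ∀ a a', a ≠ a' → v a a' = sSup (C a a'))
    (hvdiag : ∀ a, v a a = 0)
    (hτ0 : ∀ a, μ a = a → τstar a = 0)
    (hstable : Stable Mkt v μ τstar)
    (τ' : A → ℝ)
    (hτ' : ∀ a, τ' a = if μ a = a then 0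
      else τstar a + (sSup (C a (μ a)) - sInf (C a (μ a)))) :
    Stable Mkt u μ τ' ∧
      ∀ ε : ℝ, 0 ≤ ε →
        (∀ a, -ε ≤ u a (μ a) + (τ' a - ε)) ∧
        (∀ m ∈ Mkt.M, ∀ w ∈ Mkt.W,
          u m w + u w m - 2 * ε ≤
            (u m (μ m) + (τ' m - ε)) + (u w (μ w) + (τ' w - ε))) := by
  have hle_ucb : ∀ a a', a ≠ a' → u a a' ≤ v a a' := fun a a' h => by
    rw [hv a a' h]
    exact le_csSup (hC a a').2.bddAbove (hmem a a')
  have hpay : ∀ a, v a (μ a) + τstar a ≤ u a (μ a) + τ' a := by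
    intro a
    rw [hτ' a]
    split_ifs with h
    · rw [h, hvdiag, hu, hτ0 a h]
    · rw [hv a (μ a) (Ne.symm h)]
      linarith [csInf_le (hC a (μ a)).2.bddBelow (hmem a (μ a))]
  have hstab : Stable Mkt u μ τ' := hstable.of_le (fun m hm w hw =>
    have hmw := Mkt.ne_of_mem_M_of_mem_W hm hw
    ⟨hle_ucb m w hmw, hle_ucb w m hmw.symm⟩) hpay
  exact ⟨hstab, fun ε _ => hstab.epsStable_sub ε⟩

/-- shifting the UCB-stable transfers up by the confidence widths gives an
outcome stable for the true utilities; subtracting `ε` then gives an `ε`-stable outcome. -/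
theorem search_frictions_stability
    (Mkt : TwoSidedMarket A) (u v : A → A → ℝ) (μ : A → A) (τstar : A → ℝ)
    (C : A → A → Set ℝ)
    (hC : ∀ a a', (C a a').Nonempty ∧ IsCompact (C a a'))
    (hmem : ∀ a a', u a a' ∈ C a a')
    (hu : ∀ a, u a a = 0)
    (hv : ∀ a a', a ≠ a' → v a a' = sSup (C a a'))
    (hvdiag : ∀ a, v a a = 0)
    (hμ : IsMatchingOn Mkt Finset.univ μ)
    (hτ0 : ∀ a, μ a = a → τstar a = 0)
    (hstable : Stable Mkt v μ τstar)
    (τ' : A → ℝ)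
    (hτ' : ∀ a, τ' a = if μ a = a then 0
      else τstar a + (sSup (C a (μ a)) - sInf (C a (μ a)))) :
    Stable Mkt u μ τ' ∧
      ∀ ε : ℝ, 0 ≤ ε →
        (∀ a, -ε ≤ u a (μ a) + (τ' a - ε)) ∧
        (∀ m ∈ Mkt.M, ∀ w ∈ Mkt.W,
          u m w + u w m - 2 * ε ≤
            (u m (μ m) + (τ' m - ε)) + (u w (μ w) + (τ' w - ε))) :=
  search_frictions_stability_general Mkt u v μ τstar C hC hmem hu hv hvdiag hτ0 hstable τ' hτ'
end
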